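/- A set S ⊆ ℕ^ℕ is guessable if and only if it is both Gδ and Fσ in the product topology on ℕ^ℕ (ℕ discrete). -/
import Mathlib

open Filter Set
open scoped Classical

/-- The initial segment `(f 0, ..., f n)` of an infinite sequence. -/
def seg (f : ℕ → ℕ) (n : ℕ) : List ℕ := List.ofFn fun i : Fin (n + 1) => f i

/-- `G` guesses `S`: for every `f` eventually `G (f 0, ..., f n)` is 1 if `f ∈ S`, else 0. -/
def Guesses (G : List ℕ → Fin 2) (S : Set (ℕ → ℕ)) : Prop :=
  ∀ f : ℕ → ℕ, ∃ m, ∀ n, n > m → G (seg f n) = if f ∈ S then 1 else 0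

/-- `S` is guessable if some `G` guesses it. -/
def Guessable (S : Set (ℕ → ℕ)) : Prop := ∃ G, Guesses G S

/-- An infinite sequence extends a finite sequence. -/
def ExtendsSeq (h : ℕ → ℕ) (g : List ℕ) : Prop :=
  ∀ i, (hi : i < g.length) → h i = g.get ⟨i, hi⟩

/-- `S` is overguessable. -/
def Overguessable (S : Set (ℕ → ℕ)) : Prop :=
  ∃ μ : List ℕ → ℕ∞,
    (∀ f ∈ S, ∃ B : ℕ, ∀ᶠ n in atTop, μ (seg f n) ≤ (B : ℕ∞)) ∧
    (∀ f ∉ S, ∀ B : ℕ, ∀ᶠ n in atTop, (B : ℕ∞) < μ (seg f n))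

lemma seg_length (f : ℕ → ℕ) (n : ℕ) : (seg f n).length = n + 1 := by simp [seg]

lemma seg_get (f : ℕ → ℕ) (n i : ℕ) (hi : i < (seg f n).length) :
    (seg f n).get ⟨i, hi⟩ = f i := by
  simp only [seg, List.get_eq_getElem, List.getElem_ofFn]

lemma extends_seg_iff {g f : ℕ → ℕ} {n : ℕ} :
    ExtendsSeq g (seg f n) ↔ ∀ i < n + 1, g i = f i := by
  constructor
  · intro h i hi
    have hi' : i < (seg f n).length := by rw [seg_length]; exact hi
    rw [h i hi', seg_get]
  · intro h i hi
    rw [seg_get]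
    exact h i (by rw [seg_length] at hi; exact hi)

lemma extends_seg_self (f : ℕ → ℕ) (n : ℕ) : ExtendsSeq f (seg f n) :=
  extends_seg_iff.2 fun _ _ => rfl

/-- Some element of `A` extends `σ`. -/
def InTree (A : Set (ℕ → ℕ)) (σ : List ℕ) : Prop := ∃ h ∈ A, ExtendsSeq h σ

lemma inTree_of_mem {A : Set (ℕ → ℕ)} {f : ℕ → ℕ} (hf : f ∈ A) (n : ℕ) :
    InTree A (seg f n) := ⟨f, hf, extends_seg_self f n⟩

lemma closed_escape {A : Set (ℕ → ℕ)} (hA : IsClosed A) {f : ℕ → ℕ} (hf : f ∉ A) :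
    ∀ᶠ n in atTop, ¬ InTree A (seg f n) := by
  have hopen : IsOpen Aᶜ := hA.isOpen_compl
  rw [isOpen_pi_iff] at hopen
  obtain ⟨I, u, hu, hsub⟩ := hopen f hf
  refine eventually_atTop.2 ⟨I.sup id, fun n hn hT => ?_⟩
  obtain ⟨g, hgA, hg⟩ := hT
  have : g ∈ (I : Set ℕ).pi u := by
    intro a ha
    have ha' : a ≤ I.sup id := Finset.le_sup (f := id) ha
    have : g a = f a := (extends_seg_iff.1 hg) a (by omega)
    rw [this]
    exact (hu a ha).2
  exact (hsub this) hgA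

lemma clopen_guess (G : List ℕ → Fin 2) (k : ℕ) (v : Fin 2) :
    IsOpen {f : ℕ → ℕ | G (seg f k) = v} ∧ IsClosed {f : ℕ → ℕ | G (seg f k) = v} := by
  have hc : Continuous (fun f : ℕ → ℕ => (fun i : Fin (k + 1) => f i)) :=
    continuous_pi fun i => continuous_apply _
  have : {f : ℕ → ℕ | G (seg f k) = v} =
      (fun f : ℕ → ℕ => (fun i : Fin (k + 1) => f i)) ⁻¹' {x | G (List.ofFn x) = v} := by
    ext f; simp [seg]
  rw [this]
  exact ⟨(isOpen_discrete _).preimage hc, (isClosed_discrete _).preimage hc⟩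

theorem stmt16 (S : Set (ℕ → ℕ)) :
    Guessable S ↔
      (∃ U : ℕ → Set (ℕ → ℕ), (∀ n, IsOpen (U n)) ∧ S = ⋂ n, U n) ∧
      (∃ F : ℕ → Set (ℕ → ℕ), (∀ n, IsClosed (F n)) ∧ S = ⋃ n, F n) := by
  constructor
  · rintro ⟨G, hG⟩
    constructor
    · -- Gδ
      refine ⟨fun m => {f | ∀ k > m, G (seg f k) = 0}ᶜ, fun m => ?_, ?_⟩
      · rw [isOpen_compl_iff]
        show IsClosed {f : ℕ → ℕ | ∀ k > m, G (seg f k) = 0}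
        have : {f : ℕ → ℕ | ∀ k > m, G (seg f k) = 0} =
            ⋂ k, {f : ℕ → ℕ | k > m → G (seg f k) = 0} := by
          ext f; simp
        rw [this]
        refine isClosed_iInter fun k => ?_
        by_cases hk : k > m
        · have : {f : ℕ → ℕ | k > m → G (seg f k) = 0} = {f | G (seg f k) = 0} := by
            ext f; simp [hk]
          rw [this]; exact (clopen_guess G k 0).2
        · have : {f : ℕ → ℕ | k > m → G (seg f k) = 0} = univ := by
            ext f; simp [hk]
          rw [this]; exact isClosed_univ
      · ext f
        simp only [mem_iInter, mem_compl_iff, mem_setOf_eq]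
        constructor
        · intro hfS m hall
          obtain ⟨m', hm'⟩ := hG f
          have h1 := hm' (max m m' + 1) (by omega)
          have h0 := hall (max m m' + 1) (by omega)
          rw [if_pos hfS] at h1
          rw [h1] at h0
          exact absurd h0 (by decide)
        · intro h
          by_contra hfS
          obtain ⟨m', hm'⟩ := hG f
          exact h m' fun k hk => by simpa [if_neg hfS] using hm' k hk
    · -- Fσ
      refine ⟨fun m => {f | ∀ k > m, G (seg f k) = 1}, fun m => ?_, ?_⟩
      · show IsClosed {f : ℕ → ℕ | ∀ k > m, G (seg f k) = 1}
        have : {f : ℕ → ℕ | ∀ k > m, G (seg f k) = 1} =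
            ⋂ k, {f : ℕ → ℕ | k > m → G (seg f k) = 1} := by
          ext f; simp
        rw [this]
        refine isClosed_iInter fun k => ?_
        by_cases hk : k > m
        · have : {f : ℕ → ℕ | k > m → G (seg f k) = 1} = {f | G (seg f k) = 1} := by
            ext f; simp [hk]
          rw [this]; exact (clopen_guess G k 1).2
        · have : {f : ℕ → ℕ | k > m → G (seg f k) = 1} = univ := by
            ext f; simp [hk]
          rw [this]; exact isClosed_univ
      · ext f
        simp only [mem_iUnion, mem_setOf_eq]
        constructor
        · intro hfS
          obtain ⟨m', hm'⟩ := hG f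
          exact ⟨m', fun k hk => by simpa [if_pos hfS] using hm' k hk⟩
        · rintro ⟨m, hm⟩
          by_contra hfS
          obtain ⟨m', hm'⟩ := hG f
          have h1 := hm (max m m' + 1) (by omega)
          have h0 := hm' (max m m' + 1) (by omega)
          rw [if_neg hfS] at h0
          rw [h1] at h0
          exact absurd h0 (by decide)
  · rintro ⟨⟨U, hUopen, hUS⟩, ⟨F, hFclosed, hFS⟩⟩
    set C : ℕ → Set (ℕ → ℕ) := fun i => (U i)ᶜ with hC
    have hCclosed : ∀ i, IsClosed (C i) := fun i => (hUopen i).isClosed_compl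
    have hFsub : ∀ i, F i ⊆ S := fun i => hFS ▸ subset_iUnion F i
    have hCsub : ∀ i, C i ⊆ Sᶜ := fun i => compl_subset_compl.2 (hUS ▸ iInter_subset U i)
    refine ⟨fun σ => if h : ∃ i, InTree (F i) σ ∨ InTree (C i) σ then
      (if InTree (F (Nat.find h)) σ then 1 else 0) else 0, ?_⟩
    intro f
    have hex : ∃ i, f ∈ F i ∨ f ∈ C i := by
      by_cases hfS : f ∈ S
      · obtain ⟨i, hi⟩ := mem_iUnion.1 (hFS ▸ hfS)
        exact ⟨i, Or.inl hi⟩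
      · have : f ∉ ⋂ n, U n := hUS ▸ hfS
        obtain ⟨i, hi⟩ := by simpa [mem_iInter] using this
        exact ⟨i, Or.inr hi⟩
    set i₀ := Nat.find hex with hi₀
    have hspec := Nat.find_spec hex
    have hlow : ∀ᶠ n in atTop, ∀ j ∈ Finset.range i₀,
        ¬ InTree (F j) (seg f n) ∧ ¬ InTree (C j) (seg f n) := by
      rw [Filter.eventually_all_finset]
      intro j hj
      simp only [Finset.mem_range] at hj
      have hnot := Nat.find_min hex hj
      push_neg at hnot
      filter_upwards [closed_escape (hFclosed j) hnot.1, closed_escape (hCclosed j) hnot.2]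
        with n h1 h2
      exact ⟨h1, h2⟩
    by_cases hfS : f ∈ S
    · have hFi : f ∈ F i₀ := by
        rcases hspec with h | h
        · exact h
        · exact absurd hfS (hCsub i₀ h)
      have hCi : f ∉ C i₀ := fun h => (hCsub i₀ h) hfS
      have hhigh := closed_escape (hCclosed i₀) hCi
      have hev : ∀ᶠ n in atTop, _ := hlow.and hhigh
      obtain ⟨m, hm⟩ := eventually_atTop.1 hev
      refine ⟨m, fun n hn => ?_⟩
      obtain ⟨hl, hh⟩ := hm n (le_of_lt hn)
      have hP : ∃ i, InTree (F i) (seg f n) ∨ InTree (C i) (seg f n) :=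
        ⟨i₀, Or.inl (inTree_of_mem hFi n)⟩
      have hfind : Nat.find hP = i₀ := by
        refine le_antisymm (Nat.find_le (Or.inl (inTree_of_mem hFi n))) ?_
        by_contra hlt
        push_neg at hlt
        have := Nat.find_spec hP
        rcases this with h | h
        · exact (hl _ (Finset.mem_range.2 hlt)).1 h
        · exact (hl _ (Finset.mem_range.2 hlt)).2 h
      show (if h : ∃ i, InTree (F i) (seg f n) ∨ InTree (C i) (seg f n) then
          (if InTree (F (Nat.find h)) (seg f n) then (1 : Fin 2) else 0) else 0) =
          if f ∈ S then 1 else 0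
      rw [dif_pos hP, hfind, if_pos (inTree_of_mem hFi n), if_pos hfS]
    · have hCi : f ∈ C i₀ := by
        rcases hspec with h | h
        · exact absurd (hFsub i₀ h) hfS
        · exact h
      have hFi : f ∉ F i₀ := fun h => hfS (hFsub i₀ h)
      have hhigh := closed_escape (hFclosed i₀) hFi
      have hev : ∀ᶠ n in atTop, _ := hlow.and hhigh
      obtain ⟨m, hm⟩ := eventually_atTop.1 hev
      refine ⟨m, fun n hn => ?_⟩
      obtain ⟨hl, hh⟩ := hm n (le_of_lt hn)
      have hP : ∃ i, InTree (F i) (seg f n) ∨ InTree (C i) (seg f n) :=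
        ⟨i₀, Or.inr (inTree_of_mem hCi n)⟩
      have hfind : Nat.find hP = i₀ := by
        refine le_antisymm (Nat.find_le (Or.inr (inTree_of_mem hCi n))) ?_
        by_contra hlt
        push_neg at hlt
        have := Nat.find_spec hP
        rcases this with h | h
        · exact (hl _ (Finset.mem_range.2 hlt)).1 h
        · exact (hl _ (Finset.mem_range.2 hlt)).2 h
      show (if h : ∃ i, InTree (F i) (seg f n) ∨ InTree (C i) (seg f n) then
          (if InTree (F (Nat.find h)) (seg f n) then (1 : Fin 2) else 0) else 0) =
          if f ∈ S then 1 else 0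
      rw [dif_pos hP, hfind, if_neg hh, if_neg hfS]
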